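/- arXiv:2308.06008 — 7 statements merged into one kernel-verified Lean document; each statement's English description precedes it below -/
import Mathlib

section
/- If p and q are distinct primes both congruent to 3 mod 4, then the 2×2 diagonal matrices p·I₂ and q·I₂ are not congruent over ℚ. -/
open Matrix

/-! If `p • 1` and `q • 1` were congruent, comparing the `(0, 0)` entries would give
`p (a² + b²) = q` with `a, b ∈ ℚ`, so `pq = (pa)² + (pb)²` would be a sum of two rational
squares. Clearing denominators, `pq m²` is a sum of two integer squares for some `m ≠ 0`, so
every prime `≡ 3 [MOD 4]` divides it to an even power; but `p` divides it to the odd power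
`1 + 2 v_p(m)`. -/

lemma transpose_mul_smul_one_mul_apply_zero_zero {R : Type*} [CommRing R]
    (M : Matrix (Fin 2) (Fin 2) R) (a : R) :
    (Mᵀ * (a • 1) * M) 0 0 = a * (M 0 0 ^ 2 + M 1 0 ^ 2) := by
  simp only [Matrix.mul_smul, Matrix.mul_one, Matrix.smul_apply,
    Matrix.mul_apply, Fin.sum_univ_two, Matrix.transpose_apply, smul_eq_mul]
  ring

lemma Nat.exists_mul_sq_eq_sq_add_sq_of_cast_eq_sq_add_sq {n : ℕ} {c d : ℚ}
    (h : (n : ℚ) = c ^ 2 + d ^ 2) : ∃ m x y : ℕ, m ≠ 0 ∧ n * m ^ 2 = x ^ 2 + y ^ 2 := by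
  refine ⟨c.den * d.den, (c.num * d.den).natAbs, (d.num * c.den).natAbs,
    Nat.mul_ne_zero c.den_nz d.den_nz, ?_⟩
  have hc : c * (c.den * d.den) = c.num * d.den := by rw [← mul_assoc, Rat.mul_den_eq_num]
  have hd : d * (c.den * d.den) = d.num * c.den := by
    rw [mul_comm (c.den : ℚ), ← mul_assoc, Rat.mul_den_eq_num]
  have hℚ : ((n * (c.den * d.den) ^ 2 : ℕ) : ℚ) =
      ((c.num * d.den : ℤ) : ℚ) ^ 2 + ((d.num * c.den : ℤ) : ℚ) ^ 2 := by
    push_cast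
    rw [← hc, ← hd, h]
    ring
  zify
  simp only [sq_abs]
  exact_mod_cast hℚ

lemma Nat.even_padicValNat_of_cast_eq_sq_add_sq {n p : ℕ} (hn : n ≠ 0) (hp : p.Prime)
    (hp3 : p % 4 = 3) {c d : ℚ} (h : (n : ℚ) = c ^ 2 + d ^ 2) : Even (padicValNat p n) := by
  have := Fact.mk hp
  obtain ⟨m, x, y, hm, hnm⟩ := Nat.exists_mul_sq_eq_sq_add_sq_of_cast_eq_sq_add_sq h
  by_cases hpn : p ∣ n
  · have hmem : p ∈ (n * m ^ 2).primeFactors :=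
      Nat.mem_primeFactors.mpr ⟨hp, dvd_mul_of_dvd_left hpn _, by positivity⟩
    have heven := Nat.eq_sq_add_sq_iff.mp ⟨x, y, hnm⟩ p hmem hp3
    rw [padicValNat.mul hn (by positivity), padicValNat.pow m 2] at heven
    simpa [parity_simps] using heven
  · simp [padicValNat.eq_zero_of_not_dvd hpn]

theorem pI2_not_congruent_qI2_general (p q : ℕ) (hp : p.Prime) (hq : q.Prime) (hpq : p ≠ q)
    (hp3 : p % 4 = 3) :
    ¬ ∃ M : Matrix (Fin 2) (Fin 2) ℚ, IsUnit M ∧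
      Mᵀ * ((p : ℚ) • (1 : Matrix (Fin 2) (Fin 2) ℚ)) * M =
        (q : ℚ) • (1 : Matrix (Fin 2) (Fin 2) ℚ) := by
  rintro ⟨M, -, h⟩
  have := Fact.mk hp
  have := Fact.mk hq
  have h00 : (p : ℚ) * (M 0 0 ^ 2 + M 1 0 ^ 2) = q := by
    have := congrFun (congrFun h 0) 0
    rwa [transpose_mul_smul_one_mul_apply_zero_zero, Matrix.smul_apply, Matrix.one_apply_eq,
      smul_eq_mul, mul_one] at this
  have hsum : ((p * q : ℕ) : ℚ) = (p * M 0 0) ^ 2 + (p * M 1 0) ^ 2 := by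
    push_cast
    rw [← h00]
    ring
  have heven := Nat.even_padicValNat_of_cast_eq_sq_add_sq
    (Nat.mul_ne_zero hp.ne_zero hq.ne_zero) hp hp3 hsum
  have hodd : padicValNat p (p * q) = 1 := by
    simpa using padicValNat_mul_pow_left (p := p) 1 1 hpq
  rw [hodd] at heven
  exact Nat.not_even_one heven

theorem pI2_not_congruent_qI2 (p q : ℕ) (hp : p.Prime) (hq : q.Prime) (hpq : p ≠ q)
    (hp3 : p % 4 = 3) (hq3 : q % 4 = 3) :
    ¬ ∃ M : Matrix (Fin 2) (Fin 2) ℚ, IsUnit M ∧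
      Mᵀ * ((p : ℚ) • (1 : Matrix (Fin 2) (Fin 2) ℚ)) * M =
        (q : ℚ) • (1 : Matrix (Fin 2) (Fin 2) ℚ) :=
  pI2_not_congruent_qI2_general p q hp hq hpq hp3
end

section
/- Let r₃(n) denote the product of all primes congruent to 3 mod 4 dividing the square-free part of a positive integer n. For positive integers m, n, the rational quadratic forms n·I₂ and m·I₂ are congruent over ℚ if and only if r₃(n) = r₃(m). -/
/-!
A congruence `Mᵀ (n • 1) M = m • 1` gives `m = n (a² + c²)` from its `(0, 0)` entry, and
conversely `n m = x² + y²` gives one with `M = n⁻¹ [[x, -y], [y, x]]`; so the two forms are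
congruent iff `n m` is a sum of two rational squares. Clearing denominators, this happens iff
`n m` is a sum of two integer squares, i.e. iff every prime `q ≡ 3 mod 4` has even exponent in
`n m`, i.e. iff such a prime has odd exponent in `n` exactly when it does in `m`.
-/

open Matrix

/-- The product of all primes congruent to 3 mod 4 dividing the square-free
part of `n`, i.e. the primes `p ≡ 3 [MOD 4]` occurring with odd exponent in `n`. -/
def r3 (n : ℕ) : ℕ :=
  ∏ p ∈ n.primeFactors, if p % 4 = 3 ∧ Odd (n.factorization p) then p else 1

theorem Nat.exists_sq_add_sq_iff_even_factorization {n : ℕ} :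
    (∃ x y, n = x ^ 2 + y ^ 2) ↔
      ∀ q, q.Prime → q % 4 = 3 → Even (n.factorization q) := by
  rw [Nat.eq_sq_add_sq_iff]
  refine ⟨fun h q hq h4 => ?_, fun h q hq h4 => ?_⟩
  · by_cases hqn : q ∈ n.primeFactors
    · simpa [Nat.factorization_def n hq] using h q hqn h4
    · rw [← Nat.support_factorization, Finsupp.notMem_support_iff] at hqn
      simp [hqn]
  · simpa [Nat.factorization_def n (Nat.prime_of_mem_primeFactors hq)] using
      h q (Nat.prime_of_mem_primeFactors hq) h4

theorem Nat.exists_sq_add_sq_of_mul_sq {n k : ℕ} (hk : k ≠ 0)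
    (h : ∃ x y, n * k ^ 2 = x ^ 2 + y ^ 2) : ∃ x y, n = x ^ 2 + y ^ 2 := by
  rcases eq_or_ne n 0 with rfl | hn
  · exact ⟨0, 0, rfl⟩
  rw [Nat.exists_sq_add_sq_iff_even_factorization] at h ⊢
  intro q hq h4
  have hq' := h q hq h4
  rw [Nat.factorization_mul hn (pow_ne_zero 2 hk), Nat.factorization_pow] at hq'
  simpa [parity_simps] using hq'

theorem Rat.exists_sq_add_sq_iff_nat {n : ℕ} :
    (∃ a b : ℚ, (n : ℚ) = a ^ 2 + b ^ 2) ↔ ∃ x y : ℕ, n = x ^ 2 + y ^ 2 := by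
  refine ⟨fun ⟨a, b, h⟩ => ?_, fun ⟨x, y, h⟩ => ⟨x, y, by exact_mod_cast h⟩⟩
  refine Nat.exists_sq_add_sq_of_mul_sq (k := a.den * b.den) (by positivity)
    ⟨(a.num * b.den).natAbs, (b.num * a.den).natAbs, ?_⟩
  have ha : (a.num : ℚ) = a * a.den := (Rat.mul_den_eq_num a).symm
  have hb : (b.num : ℚ) = b * b.den := (Rat.mul_den_eq_num b).symm
  have hint : ((n * (a.den * b.den) ^ 2 : ℕ) : ℤ) = (a.num * b.den) ^ 2 + (b.num * a.den) ^ 2 := by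
    rw [← Int.cast_inj (α := ℚ)]
    push_cast [ha, hb, h]
    ring
  zify
  simpa [sq_abs, mul_pow] using hint

theorem Matrix.exists_isUnit_transpose_mul_smul_one_mul_eq_smul_one_iff {K : Type*} [Field K]
    {a b : K} (ha : a ≠ 0) (hb : b ≠ 0) :
    (∃ M : Matrix (Fin 2) (Fin 2) K, IsUnit M ∧ Mᵀ * (a • 1) * M = b • 1) ↔
      ∃ x y : K, a * b = x ^ 2 + y ^ 2 := by
  constructor
  · rintro ⟨M, -, hM⟩
    have h00 := congrFun (congrFun hM 0) 0
    simp only [Matrix.mul_smul, smul_apply, mul_apply, transpose_apply,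
      smul_eq_mul, Fin.sum_univ_two, one_apply_eq, mul_one] at h00
    exact ⟨a * M 0 0, a * M 1 0, by rw [← h00]; ring⟩
  · rintro ⟨x, y, hxy⟩
    set R : Matrix (Fin 2) (Fin 2) K := !![x, -y; y, x]
    have hRR : Rᵀ * R = (a * b) • (1 : Matrix (Fin 2) (Fin 2) K) := by
      ext i j
      fin_cases i <;> fin_cases j <;> simp [R, hxy, Matrix.mul_apply, Fin.sum_univ_two] <;> ring
    refine ⟨a⁻¹ • R, ?_, ?_⟩
    · rw [Matrix.isUnit_iff_isUnit_det, isUnit_iff_ne_zero, Matrix.det_smul, Matrix.det_fin_two_of]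
      have hdet : x * x - -y * y = a * b := by rw [hxy]; ring
      rw [hdet]
      positivity
    · calc (a⁻¹ • R)ᵀ * (a • 1) * (a⁻¹ • R) = (a⁻¹ * a * a⁻¹) • (Rᵀ * R) := by
            simp only [transpose_smul, Matrix.smul_mul, Matrix.mul_smul, Matrix.mul_one, smul_smul]
            ring_nf
        _ = b • 1 := by rw [hRR, smul_smul]; field_simp

lemma r3_eq_prod_of_primeFactors_subset {n : ℕ} {s : Finset ℕ} (hs : n.primeFactors ⊆ s) :
    r3 n = ∏ p ∈ s, if p % 4 = 3 ∧ Odd (n.factorization p) then p else 1 := by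
  refine Finset.prod_subset hs fun p _ hpn => ?_
  rw [← Nat.support_factorization, Finsupp.notMem_support_iff] at hpn
  simp [hpn]

lemma prime_dvd_r3_iff {q : ℕ} (hq : q.Prime) (n : ℕ) :
    q ∣ r3 n ↔ q % 4 = 3 ∧ Odd (n.factorization q) := by
  constructor
  · intro h
    obtain ⟨p, hp, hdvd⟩ := (hq.prime.dvd_finsetProd_iff _).mp h
    by_cases hc : p % 4 = 3 ∧ Odd (n.factorization p)
    · rw [if_pos hc] at hdvd
      obtain rfl := (Nat.prime_dvd_prime_iff_eq hq (Nat.prime_of_mem_primeFactors hp)).mp hdvd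
      exact hc
    · rw [if_neg hc] at hdvd
      exact absurd (Nat.dvd_one.mp hdvd) hq.ne_one
  · rintro hc
    have hqn : q ∈ n.primeFactors := by
      rw [← Nat.support_factorization, Finsupp.mem_support_iff]
      exact fun h0 => by simp [h0] at hc
    have := Finset.dvd_prod_of_mem
      (fun p => if p % 4 = 3 ∧ Odd (n.factorization p) then p else 1) hqn
    rwa [if_pos hc] at this

lemma r3_eq_iff {n m : ℕ} : r3 n = r3 m ↔
    ∀ q, q.Prime → q % 4 = 3 → (Odd (n.factorization q) ↔ Odd (m.factorization q)) := by
  constructor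
  · intro h q hq h4
    have := prime_dvd_r3_iff hq n
    rw [h, prime_dvd_r3_iff hq m] at this
    simpa [h4] using this.symm
  · intro h
    rw [r3_eq_prod_of_primeFactors_subset (Finset.subset_union_left (s₂ := m.primeFactors)),
      r3_eq_prod_of_primeFactors_subset (Finset.subset_union_right (s₁ := n.primeFactors))]
    refine Finset.prod_congr rfl fun p hp => ?_
    have hp : p.Prime := by
      rcases Finset.mem_union.1 hp with hp | hp <;> exact Nat.prime_of_mem_primeFactors hp
    by_cases h4 : p % 4 = 3
    · simp only [h4, true_and, h p hp h4]
    · simp [h4]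

lemma r3_eq_iff_even_factorization_mul {n m : ℕ} (hn : n ≠ 0) (hm : m ≠ 0) :
    r3 n = r3 m ↔ ∀ q, q.Prime → q % 4 = 3 → Even ((n * m).factorization q) := by
  simp only [r3_eq_iff, Nat.factorization_mul hn hm, Finsupp.add_apply, Nat.even_add']

theorem nI2_congruent_mI2_iff_r3_eq (n m : ℕ) (hn : 0 < n) (hm : 0 < m) :
    (∃ M : Matrix (Fin 2) (Fin 2) ℚ, IsUnit M ∧
      Mᵀ * ((n : ℚ) • (1 : Matrix (Fin 2) (Fin 2) ℚ)) * M =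
        (m : ℚ) • (1 : Matrix (Fin 2) (Fin 2) ℚ)) ↔ r3 n = r3 m := by
  rw [Matrix.exists_isUnit_transpose_mul_smul_one_mul_eq_smul_one_iff (by positivity)
      (by positivity), r3_eq_iff_even_factorization_mul hn.ne' hm.ne',
    ← Nat.exists_sq_add_sq_iff_even_factorization, ← Rat.exists_sq_add_sq_iff_nat]
  simp only [Nat.cast_mul]
end

section
/- Let M be an n×n invertible symmetric rational matrix and for i ≠ j let M_{i,i}, M_{j,j}, M_{i,j} denote the first minors obtained by deleting the indicated row and column, and M_{[i,j]} the minor obtained by deleting rows and columns i and j. Then det(M)·det(M_{[i,j]}) = M_{i,i}·M_{j,j} − (M_{i,j})². -/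
/-!
Order the indices so that `{i, j}ᶜ` comes first. If `M⁻¹ = [P Q; R S]` in the matching
block form, then `M * [1 Q; 0 S] = [A 0; C 1]` because `M * M⁻¹ = 1`, so
`det M * det S = det A`, which is the minor `M_{[i,j]}` (Jacobi's complementary minor
theorem). The `2 × 2` block `S` of `M⁻¹ = (det M)⁻¹ • adjugate M` is expressed through
cofactors, which are signed first minors; for symmetric `M` the two off-diagonal cofactors
coincide, so their product is a square.
-/

open Matrix

theorem Finset.orderIsoOfFin_compl_singleton {n : ℕ} (i : Fin (n + 1))
    (h : ({i}ᶜ : Finset (Fin (n + 1))).card = n) :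
    (fun k => (({i}ᶜ : Finset (Fin (n + 1))).orderIsoOfFin h k : Fin (n + 1))) = i.succAbove := by
  funext k
  rw [Finset.coe_orderIsoOfFin_apply, ← Finset.orderEmbOfFin_unique h (by simp [Fin.succAbove_ne])
    (Fin.strictMono_succAbove i)]

namespace Matrix

variable {R : Type*} [CommRing R]

theorem det_mul_det_inv_toBlocks₂₂ {m n : Type*} [Fintype m] [DecidableEq m] [Fintype n]
    [DecidableEq n] (M : Matrix (m ⊕ n) (m ⊕ n) R) (hM : IsUnit M.det) :
    M.det * M⁻¹.toBlocks₂₂.det = M.toBlocks₁₁.det := by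
  have h := M.mul_nonsing_inv hM
  -- keeps the rewrites of `M` below from also rewriting inside `M⁻¹`
  set N := M⁻¹
  rw [← fromBlocks_toBlocks M, ← fromBlocks_toBlocks N, fromBlocks_multiply, ← fromBlocks_one,
    fromBlocks_inj] at h
  obtain ⟨-, h₁₂, -, h₂₂⟩ := h
  calc M.det * N.toBlocks₂₂.det
      = (fromBlocks M.toBlocks₁₁ M.toBlocks₁₂ M.toBlocks₂₁ M.toBlocks₂₂ *
          fromBlocks 1 N.toBlocks₁₂ 0 N.toBlocks₂₂).det := by
        rw [det_mul, fromBlocks_toBlocks, det_fromBlocks_zero₂₁, det_one, one_mul]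
    _ = (fromBlocks M.toBlocks₁₁ 0 M.toBlocks₂₁ 1).det := by
        rw [fromBlocks_multiply, h₁₂, h₂₂]; simp
    _ = M.toBlocks₁₁.det := by rw [det_fromBlocks_zero₁₂, det_one, mul_one]

theorem det_submatrix_orderIsoOfFin {ι : Type*} [LinearOrder ι] (A : Matrix ι ι R)
    (s : Finset ι) {k : ℕ} (h : s.card = k) :
    (A.submatrix (fun x => (s.orderIsoOfFin h x : ι)) (fun x => (s.orderIsoOfFin h x : ι))).det =
      (A.submatrix ((↑) : s → ι) (↑)).det :=
  det_submatrix_equiv_self (s.orderIsoOfFin h).toEquiv (A.submatrix _ _)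

variable {ι : Type*} [Fintype ι] [DecidableEq ι]

theorem det_mul_det_inv_submatrix_compl (M : Matrix ι ι R) (hM : IsUnit M.det) (s : Finset ι) :
    M.det * (M⁻¹.submatrix ((↑) : {x // x ∉ s} → ι) (↑)).det =
      (M.submatrix ((↑) : s → ι) (↑)).det := by
  let e := Equiv.sumCompl (· ∈ s)
  have h := det_mul_det_inv_toBlocks₂₂ (M.submatrix e e) (by rwa [det_submatrix_equiv_self])
  rwa [det_submatrix_equiv_self, inv_submatrix_equiv] at h

theorem det_submatrix_subtype_pair (A : Matrix ι ι R) {i j : ι} (hij : i ≠ j)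
    (p : ι → Prop) [DecidablePred p] (hp : ∀ x, p x ↔ x = i ∨ x = j) :
    (A.submatrix ((↑) : {x // p x} → ι) (↑)).det = A i i * A j j - A i j * A j i := by
  let e : Fin 2 ≃ {x // p x} :=
    { toFun := fun k => ⟨![i, j] k, (hp _).2 (by fin_cases k <;> simp)⟩
      invFun := fun x => if x.1 = i then 0 else 1
      left_inv := fun k => by fin_cases k <;> simp [hij.symm]
      right_inv := fun x => by
        rcases (hp x).1 x.2 with h | h <;> ext <;> simp [h, hij.symm] }
  rw [← det_submatrix_equiv_self e, det_fin_two]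
  rfl

theorem det_mul_inv_apply (M : Matrix ι ι R) (hM : IsUnit M.det) (a b : ι) :
    M.det * M⁻¹ a b = M.adjugate a b := by
  rw [inv_def, smul_apply, smul_eq_mul, ← mul_assoc, Ring.mul_inverse_cancel _ hM, one_mul]

theorem det_mul_det_submatrix_compl_pair (M : Matrix ι ι R) (hM : IsUnit M.det) {i j : ι}
    (hij : i ≠ j) :
    M.det * (M.submatrix ((↑) : ({i, j}ᶜ : Finset ι) → ι) (↑)).det =
      M.adjugate i i * M.adjugate j j - M.adjugate i j * M.adjugate j i := by
  rw [← det_mul_det_inv_submatrix_compl M hM ({i, j}ᶜ : Finset ι),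
    det_submatrix_subtype_pair M⁻¹ hij _ (by simp [or_iff_not_imp_left])]
  simp only [← det_mul_inv_apply M hM]
  ring

theorem adjugate_fin_succ_apply_self {n : ℕ} (M : Matrix (Fin (n + 1)) (Fin (n + 1)) R)
    (i : Fin (n + 1)) : M.adjugate i i = (M.submatrix i.succAbove i.succAbove).det := by
  rw [adjugate_fin_succ_eq_det_submatrix, ← two_mul, pow_mul, neg_one_sq, one_pow, one_mul]

theorem IsSymm.adjugate_mul_adjugate {n : ℕ} {M : Matrix (Fin (n + 1)) (Fin (n + 1)) R}
    (hM : M.IsSymm) (i j : Fin (n + 1)) :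
    M.adjugate i j * M.adjugate j i = (M.submatrix i.succAbove j.succAbove).det ^ 2 := by
  rw [hM.adjugate.apply j i, ← sq, adjugate_fin_succ_eq_det_submatrix, mul_pow, ← pow_mul,
    pow_mul', neg_one_sq, one_pow, one_mul]

end Matrix

/-- Desnanot–Jacobi identity for symmetric matrices:
`det M * det M[i,j] = M_{i,i} * M_{j,j} - M_{i,j}^2`. -/
theorem desnanot_jacobi_symmetric (n : ℕ) (M : Matrix (Fin (n + 2)) (Fin (n + 2)) ℚ)
    (hM : M.IsSymm) (hinv : IsUnit M.det) (i j : Fin (n + 2)) (hij : i ≠ j)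
    (hci : ({i}ᶜ : Finset (Fin (n + 2))).card = n + 1)
    (hcj : ({j}ᶜ : Finset (Fin (n + 2))).card = n + 1)
    (hcij : ({i, j}ᶜ : Finset (Fin (n + 2))).card = n) :
    M.det *
      (M.submatrix (fun k => ((({i, j}ᶜ : Finset (Fin (n + 2))).orderIsoOfFin hcij k : Fin (n + 2))))
        (fun k => ((({i, j}ᶜ : Finset (Fin (n + 2))).orderIsoOfFin hcij k : Fin (n + 2))))).det =
    (M.submatrix (fun k => ((({i}ᶜ : Finset (Fin (n + 2))).orderIsoOfFin hci k : Fin (n + 2))))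
        (fun k => ((({i}ᶜ : Finset (Fin (n + 2))).orderIsoOfFin hci k : Fin (n + 2))))).det *
    (M.submatrix (fun k => ((({j}ᶜ : Finset (Fin (n + 2))).orderIsoOfFin hcj k : Fin (n + 2))))
        (fun k => ((({j}ᶜ : Finset (Fin (n + 2))).orderIsoOfFin hcj k : Fin (n + 2))))).det -
    ((M.submatrix (fun k => ((({i}ᶜ : Finset (Fin (n + 2))).orderIsoOfFin hci k : Fin (n + 2))))
        (fun k => ((({j}ᶜ : Finset (Fin (n + 2))).orderIsoOfFin hcj k : Fin (n + 2))))).det) ^ 2 := by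
  rw [Finset.orderIsoOfFin_compl_singleton i hci, Finset.orderIsoOfFin_compl_singleton j hcj,
    det_submatrix_orderIsoOfFin, det_mul_det_submatrix_compl_pair M hinv hij,
    hM.adjugate_mul_adjugate, adjugate_fin_succ_apply_self, adjugate_fin_succ_apply_self]
end

section
/- Bruck–Ryser theorem: if there exists a projective plane of order n (equivalently, a {0,1} matrix M of size n²+n+1 with Mᵀ M = n·I + J), and n ≡ 1 or 2 mod 4, then n is a sum of two integer squares. -/
/-!
Over `ℚ`, `Mᵀ M = n I + J` says that the `d = n² + n + 1` linear forms `(M u)ⱼ` satisfy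
`∑ⱼ (M u)ⱼ² = n ∑ᵢ uᵢ² + (∑ᵢ uᵢ)²`. Since `n ≡ 1, 2 (mod 4)`, `d + 1` is divisible by `4`, so
writing `n` as a sum of four squares, a block diagonal of quaternion matrices gives a rational
substitution `y = n⁻¹ Bᵀ v` in `d + 1` variables with `n ∑ y_k² = ∑ v_k²`. Take `u` to be the first
`d` coordinates of `y`. Solving for the `v_k` one at a time, each `v_j` can be made equal to
`± (M u)ⱼ` (the sign is chosen so that the resulting linear equation for `v_j` is solvable), with
`v_d = 1`. Comparing the two identities leaves `n y_d² = 1 + (∑ᵢ uᵢ)²`, so `n` is a sum of two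
rational squares and hence of two integer squares.
-/

open Matrix

theorem exists_sq_mul_eq_sq_mul_add {K : Type*} [Field K] [NeZero (2 : K)] (c : K) :
    ∃ t : K, ∀ A : K, (t * A) ^ 2 = (c * (t * A) + A) ^ 2 := by
  obtain ⟨ε, hε, hεc⟩ : ∃ ε : K, ε ^ 2 = 1 ∧ ε * c ≠ 1 := by
    by_cases hc : c = 1
    · refine ⟨-1, by ring, fun h => two_ne_zero (α := K) ?_⟩
      linear_combination -h - hc
    · exact ⟨1, one_pow 2, by rwa [one_mul]⟩
  have hs : 1 - ε * c ≠ 0 := sub_ne_zero.mpr hεc.symm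
  refine ⟨ε / (1 - ε * c), fun A => ?_⟩
  -- `x = t A` solves `x = ε (c x + A)`
  have hx : ε / (1 - ε * c) * A = ε * (c * (ε / (1 - ε * c) * A) + A) := by
    field_simp
    ring
  rw [hx, mul_pow, hε, one_mul, ← hx]

theorem exists_sq_eq_sq_mulVec {K : Type*} [Field K] [NeZero (2 : K)] :
    ∀ {d : ℕ} (C : Matrix (Fin d) (Fin (d + 1)) K),
      ∃ v : Fin (d + 1) → K, v (Fin.last d) = 1 ∧ ∀ j, v j.castSucc ^ 2 = (C *ᵥ v) j ^ 2
  | 0, _ => ⟨fun _ => 1, rfl, fun j => j.elim0⟩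
  | d + 1, C => by
    have mulVec_cons : ∀ x z j, (C *ᵥ Fin.cons x z) j = C j 0 * x + ∑ k, C j k.succ * z k :=
      fun x z j => by simp [mulVec, dotProduct, Fin.sum_univ_succ]
    obtain ⟨t, ht⟩ := exists_sq_mul_eq_sq_mul_add (C 0 0)
    -- row `0` is solved by `v 0 = t * ∑ k, C 0 k.succ * v k.succ`; substitute this into the others
    obtain ⟨z, hz_last, hz⟩ :=
      exists_sq_eq_sq_mulVec (of fun j k => C j.succ k.succ + C j.succ 0 * t * C 0 k.succ)
    refine ⟨Fin.cons (t * ∑ k, C 0 k.succ * z k) z, by simpa using hz_last, ?_⟩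
    intro j
    cases j using Fin.cases with
    | zero => simpa [mulVec_cons] using ht _
    | succ j =>
      rw [← Fin.succ_castSucc, Fin.cons_succ, hz, mulVec_cons]
      congr 1
      simp [mulVec, dotProduct, add_mul, Finset.sum_add_distrib, Finset.mul_sum, mul_assoc]
      ring

theorem exists_fin_four_mul_transpose_eq_smul_one {R : Type*} [CommRing R] (a b c e : R) :
    ∃ T : Matrix (Fin 4) (Fin 4) R, T * Tᵀ = (a ^ 2 + b ^ 2 + c ^ 2 + e ^ 2) • 1 := by
  refine ⟨!![a, b, c, e; -b, a, -e, c; -c, e, a, -b; -e, -c, b, a], ?_⟩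
  ext i j
  fin_cases i <;> fin_cases j <;> simp [mul_apply, Fin.sum_univ_four, one_apply] <;> ring

theorem exists_mul_transpose_eq_smul_one_of_dvd {R : Type*} [CommRing R] {k : ℕ}
    {T : Matrix (Fin k) (Fin k) R} {r : R} (hT : T * Tᵀ = r • 1) {N : ℕ} (hN : k ∣ N) :
    ∃ B : Matrix (Fin N) (Fin N) R, B * Bᵀ = r • 1 := by
  obtain ⟨m, rfl⟩ := hN
  refine ⟨(blockDiagonal fun _ : Fin m => T).submatrix finProdFinEquiv.symm finProdFinEquiv.symm,
    ?_⟩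
  rw [transpose_submatrix, submatrix_mul_equiv, blockDiagonal_transpose, ← blockDiagonal_mul,
    hT, show (fun _ : Fin m => r • (1 : Matrix (Fin k) (Fin k) R)) = r • 1 from rfl,
    blockDiagonal_smul, blockDiagonal_one, submatrix_smul, Pi.smul_apply, Pi.smul_apply,
    submatrix_one_equiv]

theorem Matrix.dotProduct_smul_one_add_of_one_mulVec {n R : Type*} [Fintype n] [DecidableEq n]
    [CommSemiring R] (r : R) (x : n → R) :
    x ⬝ᵥ ((r • 1 + of fun _ _ => 1) *ᵥ x) = r * (x ⬝ᵥ x) + (∑ i, x i) ^ 2 := by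
  rw [add_mulVec, smul_mulVec, one_mulVec, dotProduct_add, dotProduct_smul, smul_eq_mul, sq,
    Finset.sum_mul_sum]
  simp [mulVec, dotProduct, Finset.mul_sum]

theorem Matrix.mulVec_dotProduct_mulVec_self {m n R : Type*} [Fintype m] [Fintype n]
    [CommSemiring R] (A : Matrix m n R) (x : n → R) :
    (A *ᵥ x) ⬝ᵥ (A *ᵥ x) = x ⬝ᵥ ((Aᵀ * A) *ᵥ x) := by
  rw [← mulVec_mulVec, dotProduct_mulVec x, vecMul_transpose]

theorem exists_mul_sq_eq_one_add_sq {K : Type*} [Field K] [NeZero (2 : K)] {d : ℕ} {r : K}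
    (hr : r ≠ 0) (B : Matrix (Fin (d + 1)) (Fin (d + 1)) K) (hB : B * Bᵀ = r • 1)
    (M : Matrix (Fin d) (Fin d) K)
    (hM : ∀ x, (M *ᵥ x) ⬝ᵥ (M *ᵥ x) = r * (x ⬝ᵥ x) + (∑ i, x i) ^ 2) :
    ∃ l w : K, r * l ^ 2 = 1 + w ^ 2 := by
  set S := r⁻¹ • Bᵀ
  have hS : ∀ v, r * ((S *ᵥ v) ⬝ᵥ (S *ᵥ v)) = v ⬝ᵥ v := fun v => by
    rw [mulVec_dotProduct_mulVec_self, transpose_smul, transpose_transpose, smul_mul_smul_comm, hB,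
      smul_smul, smul_mulVec, one_mulVec, dotProduct_smul, smul_eq_mul]
    field_simp
  obtain ⟨v, hv_last, hv⟩ := exists_sq_eq_sq_mulVec (M * S.submatrix Fin.castSucc id)
  set y := S *ᵥ v
  set u : Fin d → K := fun i => y i.castSucc
  have hMu : (M * S.submatrix Fin.castSucc id) *ᵥ v = M *ᵥ u := by rw [← mulVec_mulVec]; rfl
  have hv_norm : v ⬝ᵥ v = (M *ᵥ u) ⬝ᵥ (M *ᵥ u) + 1 := by
    simp only [dotProduct, Fin.sum_univ_castSucc, ← sq, hv, hMu, hv_last, one_pow]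
  have hy_norm : y ⬝ᵥ y = u ⬝ᵥ u + y (Fin.last d) ^ 2 := by
    simp only [dotProduct, Fin.sum_univ_castSucc, ← sq, u]
  refine ⟨y (Fin.last d), ∑ i, u i, ?_⟩
  have := hS v
  rw [hv_norm, hM, hy_norm] at this
  linear_combination this

theorem Nat.exists_sq_add_sq_of_mul_sq_eq {n q x y : ℕ} (hq : q ≠ 0)
    (h : n * q ^ 2 = x ^ 2 + y ^ 2) :
    ∃ a b, n = a ^ 2 + b ^ 2 := by
  refine Nat.eq_sq_add_sq_iff.mpr fun p hp hp3 => ?_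
  have : Fact p.Prime := ⟨Nat.prime_of_mem_primeFactors hp⟩
  have hn := (Nat.mem_primeFactors.mp hp).2.2
  have hprod : p ∈ (n * q ^ 2).primeFactors :=
    Nat.primeFactors_mono (dvd_mul_right n _) (by positivity) hp
  have heven := Nat.eq_sq_add_sq_iff.mp ⟨x, y, h⟩ p hprod hp3
  rw [padicValNat.mul hn (by positivity), padicValNat.pow] at heven
  exact (Nat.even_add.mp heven).mpr (even_two_mul _)

theorem Nat.exists_sq_add_sq_of_cast_eq {n : ℕ} {x y : ℚ} (h : (n : ℚ) = x ^ 2 + y ^ 2) :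
    ∃ a b, n = a ^ 2 + b ^ 2 := by
  have hx := Rat.mul_den_eq_num x
  have hy := Rat.mul_den_eq_num y
  have hℤ : (n : ℤ) * (x.den * y.den) ^ 2 = (x.num * y.den) ^ 2 + (y.num * x.den) ^ 2 := by
    have : (n : ℚ) * (x.den * y.den) ^ 2 = (x.num * y.den) ^ 2 + (y.num * x.den) ^ 2 := by
      rw [← hx, ← hy, h]; ring
    exact_mod_cast this
  refine Nat.exists_sq_add_sq_of_mul_sq_eq (q := x.den * y.den) (x := (x.num * y.den).natAbs)
    (y := (y.num * x.den).natAbs) (by positivity) ?_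
  zify
  simpa [mul_pow, sq_abs] using hℤ

theorem bruck_ryser_general (n : ℕ) (hn : 0 < n) (hmod : n % 4 = 1 ∨ n % 4 = 2)
    (M : Matrix (Fin (n ^ 2 + n + 1)) (Fin (n ^ 2 + n + 1)) ℤ)
    (hM : Mᵀ * M = (n : ℤ) • 1 + Matrix.of fun _ _ => (1 : ℤ)) :
    ∃ a b : ℤ, (n : ℤ) = a ^ 2 + b ^ 2 := by
  have hd : 4 ∣ n ^ 2 + n + 1 + 1 := by
    rcases hmod with h | h <;> simp [Nat.dvd_iff_mod_eq_zero, Nat.add_mod, Nat.pow_mod, h]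
  obtain ⟨a, b, c, e, hsum⟩ := Nat.sum_four_squares n
  obtain ⟨T, hT⟩ := exists_fin_four_mul_transpose_eq_smul_one (a : ℚ) b c e
  rw [show (a : ℚ) ^ 2 + b ^ 2 + c ^ 2 + e ^ 2 = n by exact_mod_cast hsum] at hT
  obtain ⟨B, hB⟩ := exists_mul_transpose_eq_smul_one_of_dvd hT hd
  have hMℚ : (M.map (Int.cast : ℤ → ℚ))ᵀ * M.map Int.cast = (n : ℚ) • 1 + of fun _ _ => 1 := by
    ext i j
    have := congrFun₂ hM i j
    simp only [mul_apply, transpose_apply, map_apply, Matrix.add_apply, Matrix.smul_apply,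
      one_apply, of_apply, smul_eq_mul] at this ⊢
    exact_mod_cast this
  obtain ⟨l, w, hlw⟩ := exists_mul_sq_eq_one_add_sq (by positivity) B hB (M.map Int.cast)
    fun x => by rw [mulVec_dotProduct_mulVec_self, hMℚ, dotProduct_smul_one_add_of_one_mulVec]
  have hl : l ≠ 0 := by
    rintro rfl
    nlinarith [sq_nonneg w]
  obtain ⟨x, y, hxy⟩ := Nat.exists_sq_add_sq_of_cast_eq (x := l⁻¹) (y := w / l) (by
    field_simp
    linear_combination hlw)
  exact ⟨x, y, by exact_mod_cast hxy⟩

theorem bruck_ryser (n : ℕ) (hn : 0 < n) (hmod : n % 4 = 1 ∨ n % 4 = 2)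
    (M : Matrix (Fin (n ^ 2 + n + 1)) (Fin (n ^ 2 + n + 1)) ℤ)
    (h01 : ∀ i j, M i j = 0 ∨ M i j = 1)
    (hM : Mᵀ * M = (n : ℤ) • 1 + Matrix.of fun _ _ => (1 : ℤ)) :
    ∃ a b : ℤ, (n : ℤ) = a ^ 2 + b ^ 2 :=
  bruck_ryser_general n hn hmod M hM
end

section
/- If a symmetric 2-(v,k,λ) design exists with v even and k > λ, then k − λ is a perfect square. -/
/-!
Over `ℚ`, `det (D)² = det (Dᵀ D) = (k - λ)^(v-1) (k - λ + vλ) = (k - λ)^(v-1) k²`. As `v - 1` is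
odd, this exhibits `k - λ` as the square of the rational number `det D / ((k - λ)^(v/2 - 1) k)`,
and a natural number that is a rational square is a square.
-/

open Matrix

theorem det_smul_one_add_smul_ones {K m : Type*} [Field K] [Fintype m] [DecidableEq m]
    [Nonempty m] {a : K} (ha : a ≠ 0) (b : K) :
    det (a • (1 : Matrix m m K) + b • of fun _ _ => 1) =
      a ^ (Fintype.card m - 1) * (a + Fintype.card m * b) := by
  have hrank_one : a • (1 : Matrix m m K) + b • of (fun _ _ => 1) =
      a • (1 + replicateCol Unit (fun _ : m => b / a) * replicateRow Unit (fun _ : m => (1 : K))) := by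
    ext i j
    simp only [Matrix.add_apply, Matrix.smul_apply, one_apply, of_apply, mul_apply,
      replicateCol_apply, replicateRow_apply, Finset.univ_unique, Finset.sum_singleton, smul_eq_mul]
    split_ifs <;> field_simp
  rw [hrank_one, det_smul, det_one_add_replicateCol_mul_replicateRow,
    ← pow_sub_one_mul Fintype.card_ne_zero]
  simp [dotProduct]
  field_simp

theorem natCast_sub_add_mul_eq_sq {R : Type*} [CommRing R] {v k l : ℕ} (hv : v ≠ 0) (hk : k ≠ 0)
    (hpar : k * (k - 1) = (v - 1) * l) : ((k : R) - l) + v * l = k ^ 2 := by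
  have := congrArg (Nat.cast : ℕ → R) hpar
  push_cast [Nat.one_le_iff_ne_zero.mpr hv, Nat.one_le_iff_ne_zero.mpr hk] at this
  linear_combination -this

theorem isSquare_of_mul_sq_eq_sq {K : Type*} [Field K] {a b c : K} (hb : b ≠ 0)
    (h : a * b ^ 2 = c ^ 2) : IsSquare a := by
  rw [← eq_div_iff (pow_ne_zero 2 hb)] at h
  exact h ▸ (IsSquare.sq c).div (IsSquare.sq b)

theorem symmetric_design_v_even_perfect_square_general (v k l : ℕ) (hv : Even v)
    (hkl : l < k) (hpar : k * (k - 1) = (v - 1) * l)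
    (D : Matrix (Fin v) (Fin v) ℤ)
    (hD : Dᵀ * D = ((k : ℤ) - (l : ℤ)) • 1 + (l : ℤ) • Matrix.of fun _ _ => (1 : ℤ)) :
    ∃ m : ℕ, k - l = m ^ 2 := by
  obtain ⟨t, rfl⟩ := hv
  rcases t with _ | t
  · -- `v = 0`: the truncated `v - 1` makes `hpar` read `k * (k - 1) = 0`
    obtain rfl : k = 1 := by simp at hpar; omega
    exact ⟨1, by omega⟩
  set N := D.map (Int.castRingHom ℚ) with hN_def
  have hN : Nᵀ * N = ((k : ℚ) - l) • 1 + (l : ℚ) • of fun _ _ => 1 := by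
    rw [hN_def, ← transpose_map, ← Matrix.map_mul, hD]
    ext i j
    simp only [map_apply, Matrix.add_apply, Matrix.smul_apply, one_apply, of_apply, smul_eq_mul]
    split_ifs <;> simp
  have ha : (k : ℚ) - l ≠ 0 := sub_ne_zero.mpr (by exact_mod_cast hkl.ne')
  have hdet : ((k : ℚ) - l) * (((k : ℚ) - l) ^ t * k) ^ 2 = det N ^ 2 := by
    have hgram := congrArg det hN
    rw [det_mul, det_transpose, det_smul_one_add_smul_ones ha, Fintype.card_fin,
      natCast_sub_add_mul_eq_sq (by omega) (by omega) hpar,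
      show t + 1 + (t + 1) - 1 = 2 * t + 1 by omega] at hgram
    linear_combination -hgram
  have hsq : IsSquare ((k - l : ℕ) : ℚ) := by
    rw [Nat.cast_sub hkl.le]
    exact isSquare_of_mul_sq_eq_sq
      (mul_ne_zero (pow_ne_zero t ha) (by exact_mod_cast (Nat.zero_lt_of_lt hkl).ne')) hdet
  obtain ⟨m, hm⟩ := Rat.isSquare_natCast_iff.mp hsq
  exact ⟨m, hm.trans (sq m).symm⟩

theorem symmetric_design_v_even_perfect_square (v k l : ℕ) (hv : Even v)
    (hkl : l < k) (hpar : k * (k - 1) = (v - 1) * l)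
    (D : Matrix (Fin v) (Fin v) ℤ)
    (h01 : ∀ i j, D i j = 0 ∨ D i j = 1)
    (hD : Dᵀ * D = ((k : ℤ) - (l : ℤ)) • 1 + (l : ℤ) • Matrix.of fun _ _ => (1 : ℤ)) :
    ∃ m : ℕ, k - l = m ^ 2 :=
  symmetric_design_v_even_perfect_square_general v k l hv hkl hpar D hD
end

section
/- Bruck–Ryser–Chowla (Diophantine form): if a symmetric 2-(v,k,λ) design exists with v odd, then the equation z² = (k−λ)x² + (−1)^{(v−1)/2} λ y² has a nontrivial solution in integers. -/
/-!
Write `n = k - λ`. The Gram identity `Dᵀ D = n I + λ J` says that the quadratic form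
`n (u₁² + ⋯ + u_v²) + λ (u₁ + ⋯ + u_v)²` is a sum of `v` squares of rational linear forms in `u`.
By Lagrange, `n` is a sum of four squares, so `n (x₁² + ⋯ + x₄²)` is itself a sum of four squares
of linear forms (quaternion multiplication), and hence so is `n (x₁² + ⋯ + x_m²)` whenever `4 ∣ m`.
If `v ≡ 1 (mod 4)` this rewrites `n (u₁² + ⋯ + u_{v-1}²)`; if `v ≡ 3 (mod 4)` it rewrites
`n (u₁² + ⋯ + u_v² + t²)` after adding `n t²` to both sides. Then one chooses the variables one at a
time so that the linear forms cancel the squares in pairs, and what survives is a rational solution of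
`z² = n x² + (-1)^((v-1)/2) λ y²` with `x = 1` or `z = 1`; clearing denominators gives an integral one.
-/

open Matrix

section GramIdentity

variable {ι κ R : Type*} [Fintype κ] [CommRing R]

theorem Matrix.transpose_mul_self_map_eq {S : Type*} [CommRing S] [DecidableEq ι] (f : R →+* S)
    {D : Matrix κ ι R} {n l : R} (hD : Dᵀ * D = n • 1 + l • of fun _ _ => 1) :
    (D.map f)ᵀ * D.map f = f n • 1 + f l • of fun _ _ => 1 := by
  rw [← transpose_map, ← Matrix.map_mul, hD]
  ext i j
  simp [one_apply, apply_ite f]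

variable [Fintype ι]

theorem Matrix.mulVec_dotProduct_mulVec_self_s16 (A : Matrix κ ι R) (u : ι → R) :
    A *ᵥ u ⬝ᵥ A *ᵥ u = u ᵥ* (Aᵀ * A) ⬝ᵥ u := by
  rw [dotProduct_mulVec, vecMul_mulVec]

theorem mulVec_dotProduct_mulVec_of_transpose_mul_self_eq [DecidableEq ι] {D : Matrix κ ι R}
    {n l : R} (hD : Dᵀ * D = n • 1 + l • of fun _ _ => 1) (u : ι → R) :
    D *ᵥ u ⬝ᵥ D *ᵥ u = n * (u ⬝ᵥ u) + l * (∑ i, u i) ^ 2 := by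
  rw [mulVec_dotProduct_mulVec_self_s16, hD, vecMul_add, vecMul_smul, vecMul_smul, vecMul_one,
    add_dotProduct, smul_dotProduct, smul_dotProduct]
  simp [dotProduct, vecMul, sq, Finset.mul_sum]

theorem nonneg_of_transpose_mul_self_eq [LinearOrder R] [IsStrictOrderedRing R] [DecidableEq ι]
    [Nontrivial ι] {D : Matrix κ ι R} {n l : R} (hD : Dᵀ * D = n • 1 + l • of fun _ _ => 1) :
    0 ≤ n := by
  obtain ⟨i, j, hij⟩ := exists_pair_ne ι
  set u : ι → R := Pi.single i 1 - Pi.single j 1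
  have hsum : ∑ x, u x = 0 := by simp [u, Finset.sum_sub_distrib]
  have hsq : u ⬝ᵥ u = 2 := by
    simp [u, hij, hij.symm, one_add_one_eq_two]
  have h := mulVec_dotProduct_mulVec_of_transpose_mul_self_eq hD u
  rw [hsum, hsq] at h
  have : 0 ≤ D *ᵥ u ⬝ᵥ D *ᵥ u := Finset.sum_nonneg fun _ _ => mul_self_nonneg _
  linarith

end GramIdentity

section FourSquares

variable {R : Type*} [CommRing R]

/-- Left multiplication by the quaternion `a + b i + c j + d k` in the basis `1, i, j, k`. -/
def quaternionMatrix (a b c d : R) : Matrix (Fin 4) (Fin 4) R :=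
  !![a, -b, -c, -d; b, a, -d, c; c, d, a, -b; d, -c, b, a]

theorem quaternionMatrix_transpose_mul_self (a b c d : R) :
    (quaternionMatrix a b c d)ᵀ * quaternionMatrix a b c d =
      (a ^ 2 + b ^ 2 + c ^ 2 + d ^ 2) • 1 := by
  ext i j
  fin_cases i <;> fin_cases j <;> simp [quaternionMatrix, mul_apply, Fin.sum_univ_four] <;> ring

theorem exists_transpose_mul_self_eq_smul_one {m : ℕ} (hm : 4 ∣ m) (a b c d : R) :
    ∃ E : Matrix (Fin m) (Fin m) R, Eᵀ * E = (a ^ 2 + b ^ 2 + c ^ 2 + d ^ 2) • 1 := by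
  obtain ⟨t, rfl⟩ := hm
  refine ⟨reindex finProdFinEquiv finProdFinEquiv
    (blockDiagonal fun _ : Fin t => quaternionMatrix a b c d), ?_⟩
  rw [transpose_reindex, reindex_apply, reindex_apply, submatrix_mul_equiv,
    blockDiagonal_transpose, ← blockDiagonal_mul]
  simp only [quaternionMatrix_transpose_mul_self]
  rw [← Pi.smul_def, blockDiagonal_smul, ← Pi.one_def, blockDiagonal_one]
  ext i j
  simp only [submatrix_apply, Matrix.smul_apply, one_apply, EmbeddingLike.apply_eq_iff_eq]

theorem exists_transpose_mul_self_eq_intCast_smul_one {m : ℕ} (hm : 4 ∣ m) {n : ℤ}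
    (hn : 0 ≤ n) : ∃ E : Matrix (Fin m) (Fin m) R, Eᵀ * E = (n : R) • 1 := by
  lift n to ℕ using hn
  obtain ⟨a, b, c, d, h⟩ := Nat.sum_four_squares n
  simpa [← h] using exists_transpose_mul_self_eq_smul_one hm (a : R) b c d

end FourSquares

theorem Matrix.mulVec_vecCons_apply {κ R : Type*} [CommSemiring R] {m : ℕ}
    (M : Matrix κ (Fin (m + 1)) R) (a : R) (x : Fin m → R) (i : κ) :
    (M *ᵥ vecCons a x) i = M i 0 * a + (M.submatrix id Fin.succ *ᵥ x) i := by
  simp [mulVec, dotProduct, Fin.sum_univ_succ]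

section Elimination

variable {K : Type*} [Field K]

theorem exists_sq_mulVec_add_eq_sq [NeZero (2 : K)] :
    ∀ {m : ℕ} (A : Matrix (Fin m) (Fin m) K) (b : Fin m → K),
      ∃ x : Fin m → K, ∀ i, ((A *ᵥ x) i + b i) ^ 2 = x i ^ 2
  | 0, _, _ => ⟨0, fun i => i.elim0⟩
  | m + 1, A, b => by
    obtain ⟨ε, hε, hεA⟩ : ∃ ε : K, ε ^ 2 = 1 ∧ ε - A 0 0 ≠ 0 := by
      by_cases h : A 0 0 = 1
      · exact ⟨-1, by norm_num, by rw [h]; norm_num [two_ne_zero]⟩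
      · exact ⟨1, one_pow 2, sub_ne_zero.mpr (Ne.symm h)⟩
    set c := ε - A 0 0
    set row : Fin m → K := fun j => A 0 j.succ
    set col : Fin m → K := fun i => A i.succ 0
    obtain ⟨x', hx'⟩ := exists_sq_mulVec_add_eq_sq
      (A.submatrix Fin.succ Fin.succ + c⁻¹ • vecMulVec col row)
      (fun i => b i.succ + c⁻¹ * b 0 * col i)
    -- this choice of the first coordinate turns the first equation into `(ε * x₀) ^ 2 = x₀ ^ 2`
    set x₀ := c⁻¹ * (row ⬝ᵥ x' + b 0)
    refine ⟨vecCons x₀ x', Fin.cases ?_ fun i => ?_⟩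
    · have hx₀ : c * x₀ = row ⬝ᵥ x' + b 0 := mul_inv_cancel_left₀ hεA _
      have h₀ : (A *ᵥ vecCons x₀ x') 0 + b 0 = ε * x₀ := by
        rw [mulVec_vecCons_apply]
        change _ + row ⬝ᵥ x' + _ = _
        linear_combination -hx₀
      simp [h₀, mul_pow, hε]
    · convert hx' i using 2
      · rw [mulVec_vecCons_apply, add_mulVec, smul_mulVec, vecMulVec_mulVec]
        simp only [x₀, col, Pi.add_apply, Pi.smul_apply, smul_eq_mul, op_smul_eq_mul]
        change _ + (A.submatrix Fin.succ Fin.succ *ᵥ x') i + _ = _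
        ring
      · simp

theorem mul_inv_smul_transpose_eq_one {ι : Type*} [Fintype ι] [DecidableEq ι]
    {E : Matrix ι ι K} {n : K} (hn : n ≠ 0) (hE : Eᵀ * E = n • 1) : E * (n⁻¹ • Eᵀ) = 1 :=
  mul_eq_one_comm.mp (by rw [smul_mul, hE, smul_smul, inv_mul_cancel₀ hn, one_smul])

variable [NeZero (2 : K)] {n l : K}

theorem exists_sq_eq_add_mul_sq {m : ℕ} (hn : n ≠ 0)
    {D : Matrix (Fin (m + 1)) (Fin (m + 1)) K} (hD : Dᵀ * D = n • 1 + l • of fun _ _ => 1)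
    {E : Matrix (Fin m) (Fin m) K} (hE : Eᵀ * E = n • 1) :
    ∃ z s : K, z ^ 2 = n + l * s ^ 2 := by
  set F := n⁻¹ • Eᵀ
  obtain ⟨x, hx⟩ :=
    exists_sq_mulVec_add_eq_sq (D.submatrix Fin.succ Fin.succ * F) (fun i => D i.succ 0)
  set u : Fin (m + 1) → K := vecCons 1 (F *ᵥ x)
  have hDu : ∑ i : Fin m, (D *ᵥ u) i.succ * (D *ᵥ u) i.succ = x ⬝ᵥ x := by
    refine Finset.sum_congr rfl fun i _ => ?_
    rw [← sq, ← sq, ← hx i, mulVec_vecCons_apply, ← mulVec_mulVec, mul_one, add_comm]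
    rfl
  have hEF : E *ᵥ (F *ᵥ x) = x := by
    rw [mulVec_mulVec, mul_inv_smul_transpose_eq_one hn hE, one_mulVec]
  have hE' := mulVec_dotProduct_mulVec_of_transpose_mul_self_eq (n := n) (l := 0)
    (by rw [hE, zero_smul, add_zero]) (F *ᵥ x)
  have hD' := mulVec_dotProduct_mulVec_of_transpose_mul_self_eq hD u
  rw [hEF] at hE'
  rw [dotProduct, Fin.sum_univ_succ, hDu] at hD'
  simp only [u, cons_dotProduct_cons] at hD'
  exact ⟨(D *ᵥ u) 0, ∑ i, u i, by linear_combination hD' - hE'⟩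

theorem exists_one_eq_mul_sq_sub_mul_sq {m : ℕ} (hn : n ≠ 0)
    {D : Matrix (Fin m) (Fin m) K} (hD : Dᵀ * D = n • 1 + l • of fun _ _ => 1)
    {E : Matrix (Fin (m + 1)) (Fin (m + 1)) K} (hE : Eᵀ * E = n • 1) :
    ∃ t s : K, 1 = n * t ^ 2 - l * s ^ 2 := by
  set F := n⁻¹ • Eᵀ
  obtain ⟨x, hx⟩ := exists_sq_mulVec_add_eq_sq (D * F.submatrix Fin.succ Fin.succ)
    (D *ᵥ fun i : Fin m => F i.succ 0)
  set w := F *ᵥ vecCons 1 x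
  set u : Fin m → K := fun i => w i.succ
  have hDu : D *ᵥ u ⬝ᵥ D *ᵥ u = x ⬝ᵥ x := by
    refine Finset.sum_congr rfl fun i _ => ?_
    rw [← sq, ← sq, ← hx i, ← mulVec_mulVec, ← Pi.add_apply, ← mulVec_add]
    congr 3
    ext j
    simp only [u, w, mulVec_vecCons_apply, Pi.add_apply, mul_one, add_comm]
    rfl
  have hEF : E *ᵥ w = vecCons 1 x := by
    rw [mulVec_mulVec, mul_inv_smul_transpose_eq_one hn hE, one_mulVec]
  have hE' := mulVec_dotProduct_mulVec_of_transpose_mul_self_eq (n := n) (l := 0)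
    (by rw [hE, zero_smul, add_zero]) w
  have hD' := mulVec_dotProduct_mulVec_of_transpose_mul_self_eq hD u
  have hw : w ⬝ᵥ w = w 0 * w 0 + u ⬝ᵥ u := Fin.sum_univ_succ _
  rw [hEF, cons_dotProduct_cons, hw] at hE'
  rw [hDu] at hD'
  exact ⟨w 0, ∑ i, u i, by linear_combination hE' - hD'⟩

end Elimination

theorem exists_int_sq_eq_of_rat_sq_eq {a b : ℤ} {x y z : ℚ} (hxyz : (x, y, z) ≠ (0, 0, 0))
    (h : z ^ 2 = a * x ^ 2 + b * y ^ 2) :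
    ∃ X Y Z : ℤ, (X, Y, Z) ≠ (0, 0, 0) ∧ Z ^ 2 = a * X ^ 2 + b * Y ^ 2 := by
  set N : ℚ := x.den * y.den * z.den
  have hN : N ≠ 0 := by positivity
  obtain ⟨X, hX⟩ : ∃ X : ℤ, (X : ℚ) = N * x :=
    ⟨x.num * y.den * z.den, by push_cast; rw [← Rat.mul_den_eq_num]; ring⟩
  obtain ⟨Y, hY⟩ : ∃ Y : ℤ, (Y : ℚ) = N * y :=
    ⟨y.num * x.den * z.den, by push_cast; rw [← Rat.mul_den_eq_num]; ring⟩
  obtain ⟨Z, hZ⟩ : ∃ Z : ℤ, (Z : ℚ) = N * z :=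
    ⟨z.num * x.den * y.den, by push_cast; rw [← Rat.mul_den_eq_num]; ring⟩
  refine ⟨X, Y, Z, ?_, ?_⟩
  · contrapose! hxyz
    simp only [Prod.mk.injEq] at hxyz
    obtain ⟨rfl, rfl, rfl⟩ := hxyz
    simp_all
  · have : (Z : ℚ) ^ 2 = a * (X : ℚ) ^ 2 + b * (Y : ℚ) ^ 2 := by
      rw [hX, hY, hZ]
      linear_combination N ^ 2 * h
    exact_mod_cast this

theorem bruck_ryser_chowla_general (v k l : ℕ) (hv : Odd v)
    (D : Matrix (Fin v) (Fin v) ℤ)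
    (hD : Dᵀ * D = ((k : ℤ) - (l : ℤ)) • 1 + (l : ℤ) • Matrix.of fun _ _ => (1 : ℤ)) :
    ∃ x y z : ℤ, (x, y, z) ≠ (0, 0, 0) ∧
      z ^ 2 = ((k : ℤ) - (l : ℤ)) * x ^ 2 + (-1) ^ ((v - 1) / 2) * (l : ℤ) * y ^ 2 := by
  set n : ℤ := k - l
  rcases eq_or_ne n 0 with hn | hn
  · exact ⟨1, 0, 0, by simp, by simp [hn]⟩
  have hnQ : (n : ℚ) ≠ 0 := Int.cast_ne_zero.mpr hn
  have hDQ := D.transpose_mul_self_map_eq (Int.castRingHom ℚ) hD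
  rw [eq_intCast, eq_intCast] at hDQ
  obtain ⟨t, rfl | rfl⟩ : ∃ t, v = 4 * t + 1 ∨ v = 4 * t + 3 := by
    obtain ⟨j, rfl⟩ := hv
    exact ⟨j / 2, by omega⟩
  · obtain ⟨E, hE⟩ : ∃ E : Matrix (Fin (4 * t)) (Fin (4 * t)) ℚ, Eᵀ * E = (n : ℚ) • 1 := by
      rcases t.eq_zero_or_pos with rfl | ht
      · exact ⟨0, Matrix.ext fun i => absurd i.2 (by simp)⟩
      have : Nontrivial (Fin (4 * t + 1)) := Fin.nontrivial_iff_two_le.mpr (by omega)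
      exact exists_transpose_mul_self_eq_intCast_smul_one (dvd_mul_right 4 t)
        (by exact_mod_cast nonneg_of_transpose_mul_self_eq hDQ)
    obtain ⟨z, s, h⟩ := exists_sq_eq_add_mul_sq hnQ hDQ hE
    obtain ⟨X, Y, Z, hXYZ, h⟩ := exists_int_sq_eq_of_rat_sq_eq (a := n) (b := l) (x := 1) (y := s)
      (z := z) (by simp) (by push_cast; linear_combination h)
    refine ⟨X, Y, Z, hXYZ, ?_⟩
    rw [Even.neg_one_pow ⟨t, by omega⟩]
    linear_combination h
  · have : Nontrivial (Fin (4 * t + 3)) := Fin.nontrivial_iff_two_le.mpr (by omega)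
    obtain ⟨E, hE⟩ := exists_transpose_mul_self_eq_intCast_smul_one (R := ℚ)
      (m := 4 * t + 3 + 1) (by omega) (by exact_mod_cast nonneg_of_transpose_mul_self_eq hDQ)
    obtain ⟨x, s, h⟩ := exists_one_eq_mul_sq_sub_mul_sq hnQ hDQ hE
    obtain ⟨X, Y, Z, hXYZ, h⟩ := exists_int_sq_eq_of_rat_sq_eq (a := n) (b := -l) (x := x) (y := s)
      (z := 1) (by simp) (by push_cast; linear_combination h)
    refine ⟨X, Y, Z, hXYZ, ?_⟩
    rw [Odd.neg_one_pow ⟨t, by omega⟩]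
    linear_combination h

theorem bruck_ryser_chowla (v k l : ℕ) (hv : Odd v)
    (hpar : k * (k - 1) = (v - 1) * l)
    (D : Matrix (Fin v) (Fin v) ℤ)
    (h01 : ∀ i j, D i j = 0 ∨ D i j = 1)
    (hD : Dᵀ * D = ((k : ℤ) - (l : ℤ)) • 1 + (l : ℤ) • Matrix.of fun _ _ => (1 : ℤ)) :
    ∃ x y z : ℤ, (x, y, z) ≠ (0, 0, 0) ∧
      z ^ 2 = ((k : ℤ) - (l : ℤ)) * x ^ 2 + (-1) ^ ((v - 1) / 2) * (l : ℤ) * y ^ 2 :=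
  bruck_ryser_chowla_general v k l hv D hD
end

section
/- Suppose the incidence matrix M of a symmetric (v,k,λ) design decomposes as M = M₁ + M₂ where M_i is the incidence matrix of a symmetric (v,k_i,λ_i) design. Then k = k₁ + k₂, λ = λ₁ + λ₂ + α where α = 2k₁k₂/(v−1) is an integer, and M₁M₂ᵀ + M₂M₁ᵀ = α(J − I). -/
open Matrix

/- `IsDesign v k l N`: `N` is the incidence matrix of a symmetric `(v,k,l)` design. -/
def IsDesign (v k l : ℕ) (N : Matrix (Fin v) (Fin v) ℤ) : Prop :=
  (∀ i j, N i j = 0 ∨ N i j = 1) ∧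
  Nᵀ * N = ((k : ℤ) - (l : ℤ)) • 1 + (l : ℤ) • Matrix.of (fun _ _ => (1 : ℤ)) ∧
  N * Nᵀ = ((k : ℤ) - (l : ℤ)) • 1 + (l : ℤ) • Matrix.of (fun _ _ => (1 : ℤ)) ∧
  k * (k - 1) = (v - 1) * l

/-
Expanding `M Mᵀ = (M₁ + M₂)(M₁ + M₂)ᵀ` with `N Nᵀ = (k - λ) I + λ J` for all three designs shows
that the cross term `M₁ M₂ᵀ + M₂ M₁ᵀ` equals `(k - k₁ - k₂ - α) I + α J` with `α = λ - λ₁ - λ₂`.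
Disjoint supports make its diagonal vanish, which forces `k = k₁ + k₂`. Then `α (v - 1) = 2 k₁ k₂`
follows by subtracting the counting identities `kᵢ (kᵢ - 1) = (v - 1) λᵢ` from `k (k - 1) = (v - 1) λ`.
-/

namespace Matrix

variable {m n R : Type*} [Fintype n]

theorem mul_transpose_apply_self_eq_zero [NonUnitalNonAssocSemiring R] {A B : Matrix m n R}
    (hdisj : ∀ i j, A i j = 0 ∨ B i j = 0) (i : m) : (A * Bᵀ) i i = 0 := by
  refine Finset.sum_eq_zero fun j _ => ?_
  rcases hdisj i j with h | h <;> simp [h]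

theorem add_mul_transpose_add [NonUnitalNonAssocSemiring R] (A B : Matrix m n R) :
    (A + B) * (A + B)ᵀ = A * Aᵀ + B * Bᵀ + (A * Bᵀ + B * Aᵀ) := by
  rw [transpose_add, Matrix.add_mul, Matrix.mul_add, Matrix.mul_add]
  abel

end Matrix

theorem natCast_mul_pred_self (a : ℕ) : ((a * (a - 1) : ℕ) : ℤ) = a * ((a : ℤ) - 1) := by
  cases a <;> simp

namespace IsDesign

variable {v k l : ℕ} {N : Matrix (Fin v) (Fin v) ℤ}

theorem counting_int (h : IsDesign v k l N) (hv : 1 ≤ v) :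
    (k : ℤ) * (k - 1) = (v - 1) * l := by
  have := congrArg (Nat.cast : ℕ → ℤ) h.2.2.2
  rwa [natCast_mul_pred_self, Nat.cast_mul, Nat.cast_sub hv, Nat.cast_one] at this

theorem cross_term_eq {k1 k2 l1 l2 : ℕ} {M1 M2 : Matrix (Fin v) (Fin v) ℤ}
    (hN : IsDesign v k l N) (hM1 : IsDesign v k1 l1 M1) (hM2 : IsDesign v k2 l2 M2)
    (hsum : N = M1 + M2) :
    M1 * M2ᵀ + M2 * M1ᵀ = (((k : ℤ) - k1 - k2) - ((l : ℤ) - l1 - l2)) • 1 +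
      ((l : ℤ) - l1 - l2) • Matrix.of (fun _ _ => (1 : ℤ)) := by
  have hexpand := add_mul_transpose_add M1 M2
  rw [← hsum, hN.2.2.1, hM1.2.2.1, hM2.2.2.1] at hexpand
  rw [eq_sub_of_add_eq' hexpand.symm]
  module

end IsDesign

theorem design_decomposition (v k k1 k2 l l1 l2 : ℕ) (hv : 2 ≤ v)
    (M M1 M2 : Matrix (Fin v) (Fin v) ℤ)
    (hM : IsDesign v k l M) (hM1 : IsDesign v k1 l1 M1) (hM2 : IsDesign v k2 l2 M2)
    (hsum : M = M1 + M2)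
    (hdisj : ∀ i j, M1 i j = 0 ∨ M2 i j = 0) :
    k = k1 + k2 ∧
    ∃ α : ℤ, α * ((v : ℤ) - 1) = 2 * (k1 : ℤ) * (k2 : ℤ) ∧
      (l : ℤ) = (l1 : ℤ) + (l2 : ℤ) + α ∧
      M1 * M2ᵀ + M2 * M1ᵀ = α • (Matrix.of (fun _ _ => (1 : ℤ)) - 1) := by
  have hcross := hM.cross_term_eq hM1 hM2 hsum
  have hv1 : 1 ≤ v := by omega
  have i : Fin v := ⟨0, hv1⟩
  have hdiag : (M1 * M2ᵀ + M2 * M1ᵀ) i i = 0 := by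
    rw [Matrix.add_apply, mul_transpose_apply_self_eq_zero hdisj,
      mul_transpose_apply_self_eq_zero fun i j => (hdisj i j).symm, add_zero]
  have hk : (k : ℤ) = k1 + k2 := by
    have := congrFun₂ hcross i i
    simp only [hdiag, Matrix.add_apply, Matrix.smul_apply, one_apply_eq, of_apply,
      smul_eq_mul] at this
    linarith
  refine ⟨by exact_mod_cast hk, (l : ℤ) - l1 - l2, ?_, by ring, ?_⟩
  · linear_combination hM1.counting_int hv1 + hM2.counting_int hv1 -
      hM.counting_int hv1 + ((k : ℤ) + k1 + k2 - 1) * hk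
  · rw [hcross, hk]
    module
end
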